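/- Let D ⊂ ℝ^d be a nonempty compact set and let f : ℝ^d → ℝ be continuous. Fix constants ρ ≥ 1, 0 < c_Σ ≤ C_Σ, and 0 < w₋ ≤ w₊. For every ε > 0 there exists h₀ > 0 with the following property: for every finite set of centers μ_1,…,μ_K ∈ D whose fill distance h = sup_{x∈D} min_{1≤k≤K} ‖x−μ_k‖ satisfies 0 < h ≤ h₀ and whose separation radius q = (1/2) min_{i≠j} ‖μ_i−μ_j‖ satisfies h ≤ ρ q, for all weights w_k ∈ [w₋, w₊] and all symmetric positive definite matrices Σ_k with c_Σ h² I ⪯ Σ_k ⪯ C_Σ h² I, the normalized Shepard approximant f_K(x) = Σ_{k=1}^K ψ_k(x) f(μ_k) satisfies sup_{x∈D} |f(x) − f_K(x)| < ε. -/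

import Mathlib

open MeasureTheory

/-- The anisotropic Gaussian basis function
`φₖ(x) = exp(−(1/2)(x−μₖ)ᵀ Σₖ⁻¹ (x−μₖ))`. -/
noncomputable def gaussBasis {d K : ℕ} (S : Fin K → Matrix (Fin d) (Fin d) ℝ)
    (μ : Fin K → EuclideanSpace ℝ (Fin d)) (k : Fin K)
    (x : EuclideanSpace ℝ (Fin d)) : ℝ :=
  Real.exp (-(1 / 2 : ℝ) * ∑ i, ∑ j, (x i - μ k i) * (S k)⁻¹ i j * (x j - μ k j))

/-- The normalized Shepard weight `ψₖ(x) = wₖ φₖ(x) / ∑ⱼ wⱼ φⱼ(x)`. -/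
noncomputable def shepardWeight {d K : ℕ} (S : Fin K → Matrix (Fin d) (Fin d) ℝ)
    (μ : Fin K → EuclideanSpace ℝ (Fin d)) (w : Fin K → ℝ) (k : Fin K)
    (x : EuclideanSpace ℝ (Fin d)) : ℝ :=
  w k * gaussBasis S μ k x / ∑ j, w j * gaussBasis S μ j x

/-! Since the weights `ψₖ(x)` are nonnegative and sum to one,
`f x - f_K x = ∑ₖ ψₖ(x) (f x - f μₖ)`. Centers within the uniform-continuity radius `r` of `x`
contribute at most `ε / 2`. The covariance bounds give `φₖ(x) ≤ exp(-‖x - μₖ‖² / (2 C_Σ h²))`, and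
the center nearest to `x` (at distance `≤ h`) bounds the denominator below by
`w₋ exp(-1 / (2 c_Σ))`, so each far center has weight `O(exp(-r² / (2 C_Σ h²)))`. Disjoint balls of
radius `q ≥ h / ρ` around the centers give `K = O(h⁻ᵈ)` by comparing volumes, and
`h⁻ᵈ exp(-r² / (2 C_Σ h²)) → 0` as `h → 0⁺`. -/

open Filter Finset Matrix Metric Real Topology

namespace Matrix

variable {n : Type*} [Fintype n]

lemma dotProduct_self_nonneg (v : n → ℝ) : 0 ≤ v ⬝ᵥ v := by
  simpa using dotProduct_self_star_nonneg v

variable [DecidableEq n] {S : Matrix n n ℝ}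

lemma PosDef.mulVec_inv_mulVec (hS : S.PosDef) (v : n → ℝ) : S *ᵥ (S⁻¹ *ᵥ v) = v := by
  rw [mulVec_mulVec, mul_nonsing_inv _ ((isUnit_iff_isUnit_det S).mp hS.isUnit), one_mulVec]

lemma PosDef.dotProduct_self_le_mul_dotProduct_inv_mulVec {b : ℝ} (hS : S.PosDef)
    (hSb : (b • 1 - S).PosSemidef) (v : n → ℝ) : v ⬝ᵥ v ≤ b * (v ⬝ᵥ S⁻¹ *ᵥ v) := by
  set y := S⁻¹ *ᵥ v
  have hSy : S *ᵥ y = v := hS.mulVec_inv_mulVec v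
  have hyv : y ⬝ᵥ S *ᵥ v = v ⬝ᵥ v := by
    rw [dotProduct_mulVec, ← mulVec_transpose, ← conjTranspose_eq_transpose_of_trivial,
      hS.isHermitian.eq, hSy, dotProduct_comm]
  have hvSv : v ⬝ᵥ S *ᵥ v ≤ b * (v ⬝ᵥ v) := by
    simpa [sub_mulVec, smul_mulVec, dotProduct_sub, dotProduct_smul] using
      hSb.dotProduct_mulVec_nonneg v
  have hy : 0 ≤ v ⬝ᵥ y := by
    rw [← hSy, dotProduct_comm]; simpa using hS.posSemidef.dotProduct_mulVec_nonneg y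
  -- Cauchy–Schwarz for `(x, z) ↦ x ⬝ᵥ S *ᵥ z` at `(y, v)`, where `S *ᵥ y = v`
  have hcs := LinearMap.BilinForm.apply_mul_apply_le_of_forall_zero_le (toBilin' S)
    (fun x => by simpa [toBilin'_apply'] using hS.posSemidef.dotProduct_mulVec_nonneg x) y v
  simp only [toBilin'_apply', hyv, hSy, dotProduct_comm y v] at hcs
  rcases (dotProduct_self_nonneg v).eq_or_lt with hv | hv
  · obtain rfl := dotProduct_self_eq_zero.mp hv.symm
    simp
  · nlinarith [mul_le_mul_of_nonneg_left hvSv hy]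

lemma PosDef.mul_dotProduct_inv_mulVec_le {a : ℝ} (hS : S.PosDef)
    (haS : (S - a • 1).PosSemidef) (v : n → ℝ) : a * (v ⬝ᵥ S⁻¹ *ᵥ v) ≤ v ⬝ᵥ v := by
  set y := S⁻¹ *ᵥ v
  have hSy : S *ᵥ y = v := hS.mulVec_inv_mulVec v
  have hyy : a * (y ⬝ᵥ y) ≤ v ⬝ᵥ y := by
    simpa [sub_mulVec, smul_mulVec, dotProduct_sub, dotProduct_smul, hSy,
      dotProduct_comm y v] using haS.dotProduct_mulVec_nonneg y
  have hcs := LinearMap.BilinForm.apply_mul_apply_le_of_forall_zero_le (toBilin' 1)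
    (fun x => by simpa [toBilin'_apply'] using dotProduct_self_nonneg x) v y
  simp only [toBilin'_apply', one_mulVec, dotProduct_comm y v] at hcs
  have hy : 0 ≤ v ⬝ᵥ y := by
    rw [← hSy, dotProduct_comm]; simpa using hS.posSemidef.dotProduct_mulVec_nonneg y
  have hvv := dotProduct_self_nonneg v
  rcases hy.eq_or_lt with hy0 | hy0
  · rw [← hy0, mul_zero]; exact hvv
  rcases lt_or_ge a 0 with ha | ha
  · nlinarith
  · nlinarith [mul_le_mul_of_nonneg_left hyy hvv, mul_le_mul_of_nonneg_left hcs ha]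

end Matrix

lemma EuclideanSpace.norm_sq_eq_dotProduct {n : Type*} [Fintype n] (y : EuclideanSpace ℝ n) :
    ‖y‖ ^ 2 = y.ofLp ⬝ᵥ y.ofLp := by
  rw [EuclideanSpace.real_norm_sq_eq]; simp only [dotProduct, sq]

section Gaussian

variable {d K : ℕ} {S : Fin K → Matrix (Fin d) (Fin d) ℝ} {μ : Fin K → EuclideanSpace ℝ (Fin d)}
  {k : Fin K} {x : EuclideanSpace ℝ (Fin d)}

lemma gaussBasis_eq_exp_dotProduct :
    gaussBasis S μ k x =
      Real.exp (-(1 / 2) * ((x - μ k).ofLp ⬝ᵥ (S k)⁻¹ *ᵥ (x - μ k).ofLp)) := by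
  simp only [gaussBasis, dotProduct, mulVec, Finset.mul_sum, PiLp.sub_apply, mul_assoc]

lemma gaussBasis_pos : 0 < gaussBasis S μ k x := Real.exp_pos _

lemma exp_neg_norm_sq_div_le_gaussBasis {a : ℝ} (ha : 0 < a) (hS : (S k).PosDef)
    (haS : (S k - a • 1).PosSemidef) :
    Real.exp (-(‖x - μ k‖ ^ 2 / (2 * a))) ≤ gaussBasis S μ k x := by
  have := hS.mul_dotProduct_inv_mulVec_le haS (x - μ k).ofLp
  have hle := (le_div_iff₀' ha).mpr this
  rw [gaussBasis_eq_exp_dotProduct, Real.exp_le_exp, EuclideanSpace.norm_sq_eq_dotProduct,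
    mul_comm 2 a, ← div_div]
  linarith

lemma gaussBasis_le_exp_neg_norm_sq_div {b : ℝ} (hb : 0 < b) (hS : (S k).PosDef)
    (hSb : (b • 1 - S k).PosSemidef) :
    gaussBasis S μ k x ≤ Real.exp (-(‖x - μ k‖ ^ 2 / (2 * b))) := by
  have := hS.dotProduct_self_le_mul_dotProduct_inv_mulVec hSb (x - μ k).ofLp
  have hle := (div_le_iff₀' hb).mpr this
  rw [gaussBasis_eq_exp_dotProduct, Real.exp_le_exp, EuclideanSpace.norm_sq_eq_dotProduct,
    mul_comm 2 b, ← div_div]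
  linarith

end Gaussian

lemma tendsto_exp_neg_div_sq_div_pow {κ : ℝ} (hκ : 0 < κ) (n : ℕ) :
    Tendsto (fun h : ℝ => Real.exp (-κ / h ^ 2) / h ^ n) (𝓝[>] 0) (𝓝 0) := by
  have hdecay : Tendsto (fun t : ℝ => t ^ (n : ℝ) * Real.exp (-κ * t ^ 2)) atTop (𝓝 0) :=
    (rpow_mul_exp_neg_mul_sq_isLittleO_exp_neg hκ n).trans_tendsto <|
      Real.tendsto_exp_atBot.comp <| tendsto_id.const_mul_atTop_of_neg (by norm_num)
  refine (hdecay.comp tendsto_inv_nhdsGT_zero).congr fun h => ?_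
  simp only [Function.comp_apply, Real.rpow_natCast, inv_pow]
  rw [div_eq_mul_inv, div_eq_mul_inv, neg_mul, mul_comm]

lemma card_mul_pow_le_of_pairwise_le_dist {E : Type*} [NormedAddCommGroup E] [NormedSpace ℝ E]
    [FiniteDimensional ℝ E] {ι : Type*} [Fintype ι] (p : ι → E) {x₀ : E} {R q : ℝ}
    (hR : 0 ≤ R) (hq : 0 < q) (hp : ∀ k, dist (p k) x₀ ≤ R)
    (hsep : Pairwise fun i j => 2 * q ≤ dist (p i) (p j)) :
    Fintype.card ι * q ^ Module.finrank ℝ E ≤ (R + q) ^ Module.finrank ℝ E := by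
  let _ : MeasurableSpace E := borel E
  have : BorelSpace E := ⟨rfl⟩
  let m : Measure E := Measure.addHaar
  have hdisj : Pairwise (Function.onFun Disjoint fun k => ball (p k) q) :=
    fun i j hij => ball_disjoint_ball (by linarith [hsep hij])
  have hsub : (⋃ k, ball (p k) q) ⊆ ball x₀ (R + q) := Set.iUnion_subset fun k =>
    ball_subset_ball' (by linarith [hp k])
  have hvol := measure_mono (μ := m) hsub
  rw [measure_iUnion hdisj fun k => measurableSet_ball, tsum_fintype,
    Finset.sum_congr rfl fun k _ => m.addHaar_ball_of_pos (p k) hq,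
    m.addHaar_ball_of_pos x₀ (by positivity), Finset.sum_const, nsmul_eq_mul, ← mul_assoc,
    ENNReal.mul_le_mul_iff_left (measure_ball_pos m 0 one_pos).ne' measure_ball_lt_top.ne,
    ← ENNReal.ofReal_natCast, ← ENNReal.ofReal_mul (by positivity),
    ENNReal.ofReal_le_ofReal_iff (by positivity)] at hvol
  simpa using hvol

lemma abs_sub_sum_mul_le {ι : Type*} [Fintype ι] {ψ a : ι → ℝ} {y η τ M : ℝ}
    (hψ : ∀ k, 0 ≤ ψ k) (hψ1 : ∑ k, ψ k = 1) (hη : 0 ≤ η) (hτ : 0 ≤ τ)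
    (hM : ∀ k, |y - a k| ≤ M) (hsplit : ∀ k, |y - a k| ≤ η ∨ ψ k ≤ τ) :
    |y - ∑ k, ψ k * a k| ≤ η + Fintype.card ι * (τ * M) := by
  have hterm : ∀ k, ψ k * |y - a k| ≤ ψ k * η + τ * M := fun k => by
    have hM0 : 0 ≤ M := (abs_nonneg _).trans (hM k)
    rcases hsplit k with hk | hk
    · nlinarith [mul_le_mul_of_nonneg_left hk (hψ k), mul_nonneg hτ hM0]
    · nlinarith [mul_le_mul hk (hM k) (abs_nonneg _) hτ, mul_nonneg (hψ k) hη]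
  calc |y - ∑ k, ψ k * a k| = |∑ k, ψ k * (y - a k)| := by
        simp only [mul_sub, sum_sub_distrib, ← sum_mul, hψ1, one_mul]
    _ ≤ ∑ k, ψ k * |y - a k| := (abs_sum_le_sum_abs _ _).trans_eq <| by
        simp only [abs_mul, abs_of_nonneg (hψ _)]
    _ ≤ ∑ k, (ψ k * η + τ * M) := sum_le_sum fun k _ => hterm k
    _ = η + Fintype.card ι * (τ * M) := by
        rw [sum_add_distrib, ← sum_mul, hψ1, one_mul, sum_const, card_univ, nsmul_eq_mul]

section Shepard

variable {d K : ℕ} {S : Fin K → Matrix (Fin d) (Fin d) ℝ} {μ : Fin K → EuclideanSpace ℝ (Fin d)}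
  {w : Fin K → ℝ} {x : EuclideanSpace ℝ (Fin d)}

lemma shepardWeight_nonneg (hw : ∀ j, 0 ≤ w j) (k : Fin K) : 0 ≤ shepardWeight S μ w k x :=
  div_nonneg (mul_nonneg (hw k) gaussBasis_pos.le)
    (sum_nonneg fun j _ => mul_nonneg (hw j) gaussBasis_pos.le)

lemma sum_shepardWeight [NeZero K] (hw : ∀ j, 0 < w j) : ∑ k, shepardWeight S μ w k x = 1 := by
  simp only [shepardWeight, ← Finset.sum_div]
  exact div_self (sum_pos (fun j _ => mul_pos (hw j) gaussBasis_pos) univ_nonempty).ne'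

lemma shepardWeight_le_div (hw : ∀ j, 0 < w j) (k j : Fin K) :
    shepardWeight S μ w k x ≤ w k * gaussBasis S μ k x / (w j * gaussBasis S μ j x) :=
  div_le_div_of_nonneg_left (mul_pos (hw k) gaussBasis_pos).le (mul_pos (hw j) gaussBasis_pos)
    (single_le_sum (f := fun i => w i * gaussBasis S μ i x)
      (fun i _ => (mul_pos (hw i) gaussBasis_pos).le) (mem_univ j))

lemma shepardWeight_le {a b wlo whi : ℝ} (ha : 0 < a) (hb : 0 < b) (hS : ∀ k, (S k).PosDef)
    (haS : ∀ k, (S k - a • 1).PosSemidef) (hSb : ∀ k, (b • 1 - S k).PosSemidef)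
    (hwlo : 0 < wlo) (hw : ∀ k, wlo ≤ w k ∧ w k ≤ whi) (k j : Fin K) :
    shepardWeight S μ w k x ≤
      whi / wlo * Real.exp (‖x - μ j‖ ^ 2 / (2 * a)) *
        Real.exp (-(‖x - μ k‖ ^ 2 / (2 * b))) := by
  have hwpos : ∀ k, 0 < w k := fun k => hwlo.trans_le (hw k).1
  calc shepardWeight S μ w k x
      ≤ w k * gaussBasis S μ k x / (w j * gaussBasis S μ j x) := shepardWeight_le_div hwpos k j
    _ ≤ whi * Real.exp (-(‖x - μ k‖ ^ 2 / (2 * b))) /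
          (wlo * Real.exp (-(‖x - μ j‖ ^ 2 / (2 * a)))) := by
      have hwhi : 0 ≤ whi := (hwpos k).le.trans (hw k).2
      refine div_le_div₀ (by positivity) ?_ (by positivity) ?_
      · exact mul_le_mul (hw k).2 (gaussBasis_le_exp_neg_norm_sq_div hb (hS k) (hSb k))
          gaussBasis_pos.le hwhi
      · exact mul_le_mul (hw j).1 (exp_neg_norm_sq_div_le_gaussBasis ha (hS j) (haS j))
          (Real.exp_pos _).le (hwpos j).le
    _ = _ := by rw [Real.exp_neg (‖x - μ j‖ ^ 2 / (2 * a))]; field_simp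

lemma shepardWeight_le_exp_of_le_norm_sub {c C h r wlo whi : ℝ} (hc : 0 < c) (hC : 0 < C)
    (hh : 0 < h) (hr : 0 ≤ r) (hS : ∀ k, (S k).PosDef)
    (hSbd : ∀ k, (S k - (c * h ^ 2) • 1).PosSemidef ∧ ((C * h ^ 2) • 1 - S k).PosSemidef)
    (hwlo : 0 < wlo) (hw : ∀ k, wlo ≤ w k ∧ w k ≤ whi) {j k : Fin K} (hj : ‖x - μ j‖ ≤ h)
    (hk : r ≤ ‖x - μ k‖) :
    shepardWeight S μ w k x ≤
      whi / wlo * Real.exp (1 / (2 * c)) * Real.exp (-(r ^ 2 / (2 * C)) / h ^ 2) := by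
  refine (shepardWeight_le (by positivity) (by positivity) hS (fun k => (hSbd k).1)
    (fun k => (hSbd k).2) hwlo hw k j).trans ?_
  have hwhi : 0 ≤ whi / wlo := div_nonneg (hwlo.le.trans (hw k).1 |>.trans (hw k).2) hwlo.le
  gcongr _ * Real.exp ?_ * Real.exp ?_
  · calc ‖x - μ j‖ ^ 2 / (2 * (c * h ^ 2)) ≤ h ^ 2 / (2 * (c * h ^ 2)) := by gcongr
      _ = 1 / (2 * c) := by field_simp
  · calc -(‖x - μ k‖ ^ 2 / (2 * (C * h ^ 2))) ≤ -(r ^ 2 / (2 * (C * h ^ 2))) := by gcongr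
      _ = -(r ^ 2 / (2 * C)) / h ^ 2 := by field_simp

lemma abs_sub_sum_shepardWeight_mul_le {f : EuclideanSpace ℝ (Fin d) → ℝ}
    {c C h r wlo whi η M : ℝ} (hc : 0 < c) (hC : 0 < C) (hh : 0 < h) (hr : 0 ≤ r) (hη : 0 ≤ η)
    (hS : ∀ k, (S k).PosDef)
    (hSbd : ∀ k, (S k - (c * h ^ 2) • 1).PosSemidef ∧ ((C * h ^ 2) • 1 - S k).PosSemidef)
    (hwlo : 0 < wlo) (hw : ∀ k, wlo ≤ w k ∧ w k ≤ whi) {j : Fin K} (hj : ‖x - μ j‖ ≤ h)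
    (hM : ∀ k, |f x - f (μ k)| ≤ M) (hnear : ∀ k, ‖x - μ k‖ < r → |f x - f (μ k)| ≤ η) :
    |f x - ∑ k, shepardWeight S μ w k x * f (μ k)| ≤
      η + K * (whi / wlo * Real.exp (1 / (2 * c)) * Real.exp (-(r ^ 2 / (2 * C)) / h ^ 2) * M) := by
  have : NeZero K := NeZero.of_pos j.pos
  have hwhi : 0 ≤ whi / wlo := div_nonneg (hwlo.le.trans ((hw j).1.trans (hw j).2)) hwlo.le
  simpa using abs_sub_sum_mul_le (shepardWeight_nonneg fun k => hwlo.le.trans (hw k).1)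
    (sum_shepardWeight fun k => hwlo.trans_le (hw k).1) hη
    (mul_nonneg (mul_nonneg hwhi (Real.exp_pos _).le) (Real.exp_pos _).le) hM
    fun k => (lt_or_ge ‖x - μ k‖ r).imp (hnear k)
      (shepardWeight_le_exp_of_le_norm_sub hc hC hh hr hS hSbd hwlo hw hj)

end Shepard

section Centers

variable {E ι : Type*} [NormedAddCommGroup E]

noncomputable def fillDistance (D : Set E) (μ : ι → E) : ℝ :=
  ⨆ x : D, ⨅ k, ‖(x : E) - μ k‖

noncomputable def separationRadius (μ : ι → E) : ℝ :=
  1 / 2 * ⨅ p : {p : ι × ι // p.1 ≠ p.2}, ‖μ p.val.1 - μ p.val.2‖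

lemma fillDistance_of_isEmpty [IsEmpty ι] (D : Set E) (μ : ι → E) : fillDistance D μ = 0 := by
  simp [fillDistance]

lemma exists_norm_sub_le_fillDistance [Finite ι] [Nonempty ι] {D : Set E}
    (hD : Bornology.IsBounded D) (μ : ι → E) {x : E} (hx : x ∈ D) :
    ∃ k, ‖x - μ k‖ ≤ fillDistance D μ := by
  have hbdd : ∀ y : E, BddBelow (Set.range fun k => ‖y - μ k‖) :=
    fun y => ⟨0, by rintro _ ⟨k, rfl⟩; exact norm_nonneg _⟩
  obtain ⟨k, hk⟩ := exists_eq_ciInf_of_finite (f := fun k => ‖x - μ k‖)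
  refine ⟨k, hk ▸ le_ciSup (f := fun y : D => ⨅ k, ‖(y : E) - μ k‖) ?_ ⟨x, hx⟩⟩
  obtain ⟨C, hC⟩ := hD.exists_norm_le
  obtain ⟨k₀⟩ := ‹Nonempty ι›
  refine ⟨C + ‖μ k₀‖, ?_⟩
  rintro _ ⟨y, rfl⟩
  exact (ciInf_le (hbdd y) k₀).trans ((norm_sub_le _ _).trans (by linarith [hC y y.2]))

lemma separationRadius_nonneg (μ : ι → E) : 0 ≤ separationRadius μ :=
  mul_nonneg (by norm_num) (Real.iInf_nonneg fun _ => norm_nonneg _)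

lemma two_mul_separationRadius_le_dist (μ : ι → E) {i j : ι} (hij : i ≠ j) :
    2 * separationRadius μ ≤ dist (μ i) (μ j) := by
  rw [separationRadius, ← mul_assoc, dist_eq_norm]
  norm_num
  exact ciInf_le ⟨0, by rintro _ ⟨p, rfl⟩; exact norm_nonneg _⟩
    (⟨(i, j), hij⟩ : {p : ι × ι // p.1 ≠ p.2})

lemma card_le_div_pow_of_le_mul_separationRadius [NormedSpace ℝ E] [FiniteDimensional ℝ E]
    [Fintype ι] (μ : ι → E) {R ρ h : ℝ} (hR : 0 ≤ R) (hμ : ∀ k, ‖μ k‖ ≤ R)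
    (hh : 0 < h) (hh1 : h ≤ 1) (hhq : h ≤ ρ * separationRadius μ) :
    (Fintype.card ι : ℝ) ≤ (1 + ρ * R) ^ Module.finrank ℝ E / h ^ Module.finrank ℝ E := by
  have hq : 0 < separationRadius μ := (separationRadius_nonneg μ).lt_of_ne <| by
    rintro h0; rw [← h0, mul_zero] at hhq; linarith
  set q := separationRadius μ
  have hpack := card_mul_pow_le_of_pairwise_le_dist μ hR hq (x₀ := 0) (by simpa using hμ)
    fun i j hij => two_mul_separationRadius_le_dist μ hij
  calc (Fintype.card ι : ℝ) ≤ ((R + q) / q) ^ Module.finrank ℝ E := by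
        rw [div_pow, le_div_iff₀ (by positivity)]; exact hpack
    _ = (1 + R / q) ^ Module.finrank ℝ E := by rw [add_div, div_self hq.ne', add_comm]
    _ ≤ (1 / h + ρ * R / h) ^ Module.finrank ℝ E := by
        gcongr (?_ + ?_) ^ _
        · exact (one_le_div hh).mpr hh1
        · rw [div_le_div_iff₀ hq hh]; nlinarith
    _ = (1 + ρ * R) ^ Module.finrank ℝ E / h ^ Module.finrank ℝ E := by
        rw [← add_div, div_pow]

end Centers

theorem shepard_uniform_approximation_general
    {d : ℕ} (D : Set (EuclideanSpace ℝ (Fin d))) (hDcpt : IsCompact D)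
    (f : EuclideanSpace ℝ (Fin d) → ℝ) (hf : Continuous f)
    (ρ cSig CSig wlo whi : ℝ) (hcSig : 0 < cSig) (hcC : cSig ≤ CSig)
    (hwlo : 0 < wlo) (hw : wlo ≤ whi)
    (ε : ℝ) (hε : 0 < ε) :
    ∃ h₀ > (0 : ℝ), ∀ (K : ℕ) (μ : Fin K → EuclideanSpace ℝ (Fin d)) (h q : ℝ),
      (∀ k, μ k ∈ D) →
      h = ⨆ x : D, ⨅ k, ‖(x : EuclideanSpace ℝ (Fin d)) - μ k‖ →
      0 < h → h ≤ h₀ →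
      q = (1 / 2) * ⨅ p : {p : Fin K × Fin K // p.1 ≠ p.2}, ‖μ p.val.1 - μ p.val.2‖ →
      h ≤ ρ * q →
      ∀ (w : Fin K → ℝ) (S : Fin K → Matrix (Fin d) (Fin d) ℝ),
        (∀ k, wlo ≤ w k ∧ w k ≤ whi) →
        (∀ k, (S k).PosDef) →
        (∀ k, (S k - (cSig * h ^ 2) • 1).PosSemidef ∧ ((CSig * h ^ 2) • 1 - S k).PosSemidef) →
        ∀ x ∈ D, |f x - ∑ k, shepardWeight S μ w k x * f (μ k)| < ε := by
  obtain ⟨M, hM⟩ := hDcpt.exists_bound_of_continuousOn hf.continuousOn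
  obtain ⟨r, hr, hfr⟩ := Metric.uniformContinuousOn_iff.mp
    (hDcpt.uniformContinuousOn_of_continuous hf.continuousOn) (ε / 2) (half_pos hε)
  obtain ⟨R, hR, hDR⟩ := hDcpt.isBounded.exists_pos_norm_le
  have hCSig : 0 < CSig := hcSig.trans_le hcC
  set τ := whi / wlo * Real.exp (1 / (2 * cSig)) * (2 * M)
  set κ := r ^ 2 / (2 * CSig)
  have hlim := ((tendsto_exp_neg_div_sq_div_pow (by positivity : 0 < κ) d).const_mul
    ((1 + ρ * R) ^ d * τ)).eventually (gt_mem_nhds (by linarith : _ * 0 < ε / 2))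
  obtain ⟨h₀, hh₀, hsmall⟩ :=
    mem_nhdsGT_iff_exists_Ioc_subset.mp (inter_mem (Ioc_mem_nhdsGT one_pos) hlim)
  refine ⟨h₀, hh₀, fun K μ h q hμD hfill hh hhh₀ hq hhq w S hwk hS hSbd x hx => ?_⟩
  obtain ⟨⟨-, hh1⟩, hdecay⟩ := hsmall ⟨hh, hhh₀⟩
  have : NeZero K := ⟨by rintro rfl; exact hh.ne' (hfill.trans (fillDistance_of_isEmpty D μ))⟩
  obtain ⟨j, hj⟩ := exists_norm_sub_le_fillDistance hDcpt.isBounded μ hx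
  have hcard : (K : ℝ) ≤ (1 + ρ * R) ^ d / h ^ d := by
    simpa using card_le_div_pow_of_le_mul_separationRadius μ hR.le (fun k => hDR _ (hμD k))
      hh hh1 (by rwa [hq] at hhq)
  have herr := abs_sub_sum_shepardWeight_mul_le (f := f) hcSig hCSig hh hr.le
    (half_pos hε).le hS hSbd hwlo hwk (hj.trans_eq hfill.symm)
    (fun k => (abs_sub _ _).trans ((add_le_add (hM x hx) (hM _ (hμD k))).trans_eq (two_mul M).symm))
    fun k hk => (hfr x hx _ (hμD k) (by rwa [dist_eq_norm])).le
  have hτ : 0 ≤ τ := by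
    have := (norm_nonneg _).trans (hM x hx)
    have := div_nonneg (hwlo.le.trans hw) hwlo.le
    positivity
  calc _ ≤ ε / 2 + K * (τ * Real.exp (-κ / h ^ 2)) := by convert herr using 3; ring
    _ ≤ ε / 2 + (1 + ρ * R) ^ d / h ^ d * (τ * Real.exp (-κ / h ^ 2)) := by gcongr
    _ = ε / 2 + (1 + ρ * R) ^ d * τ * (Real.exp (-κ / h ^ 2) / h ^ d) := by ring
    _ < ε := by linarith [show _ < ε / 2 from hdecay]

/-- Uniform convergence of normalized Gaussian Shepard approximants of a
continuous function on a compact set, as the fill distance tends to zero, uniformly over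
quasi-uniform centers, bounded weights and comparable covariances. -/
theorem shepard_uniform_approximation
    {d : ℕ} (D : Set (EuclideanSpace ℝ (Fin d))) (hDcpt : IsCompact D) (hDne : D.Nonempty)
    (f : EuclideanSpace ℝ (Fin d) → ℝ) (hf : Continuous f)
    (ρ cSig CSig wlo whi : ℝ) (hρ : 1 ≤ ρ) (hcSig : 0 < cSig) (hcC : cSig ≤ CSig)
    (hwlo : 0 < wlo) (hw : wlo ≤ whi)
    (ε : ℝ) (hε : 0 < ε) :
    ∃ h₀ > (0 : ℝ), ∀ (K : ℕ) (μ : Fin K → EuclideanSpace ℝ (Fin d)) (h q : ℝ),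
      (∀ k, μ k ∈ D) →
      h = ⨆ x : D, ⨅ k, ‖(x : EuclideanSpace ℝ (Fin d)) - μ k‖ →
      0 < h → h ≤ h₀ →
      q = (1 / 2) * ⨅ p : {p : Fin K × Fin K // p.1 ≠ p.2}, ‖μ p.val.1 - μ p.val.2‖ →
      h ≤ ρ * q →
      ∀ (w : Fin K → ℝ) (S : Fin K → Matrix (Fin d) (Fin d) ℝ),
        (∀ k, wlo ≤ w k ∧ w k ≤ whi) →
        (∀ k, (S k).PosDef) →
        (∀ k, (S k - (cSig * h ^ 2) • 1).PosSemidef ∧ ((CSig * h ^ 2) • 1 - S k).PosSemidef) →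
        ∀ x ∈ D, |f x - ∑ k, shepardWeight S μ w k x * f (μ k)| < ε :=
  shepard_uniform_approximation_general D hDcpt f hf ρ cSig CSig wlo whi hcSig hcC hwlo hw ε hε
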